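/- arXiv:1710.03884 — 5 statements merged into one kernel-verified Lean document; each statement's English description precedes it below -/
import Mathlib

section
/- Let 𝔤 be a Lie algebra with anti-Kähler structure (⟨·,·⟩, J) where J is bi-invariant ([JX,Y] = J[X,Y]). Then ∇_{JX}Y = J∇_X Y for all X,Y ∈ 𝔤, where ∇ is the Levi-Civita connection. -/
/-!
Bi-invariance moves `J` from the first slot of every bracket in the Koszul formula to any other
slot, and `J` is `B`-symmetric, so the right-hand side of the Koszul formula for `∇_{JX} Y`
paired with `Z` equals the one for `∇_X Y` paired with `JZ`. Nondegeneracy of `B` concludes.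
-/

section

variable {R L : Type*} [CommRing R] [LieRing L] [LieAlgebra R L]

theorem apply_map_eq_map_apply_of_anti_isometry {M N : Type*} [AddCommGroup M] [Module R M]
    [AddCommGroup N] [Module R N] (B : M →ₗ[R] M →ₗ[R] N) (J : M →ₗ[R] M)
    (hJ2 : ∀ X, J (J X) = -X) (hJB : ∀ X Y, B (J X) (J Y) = -B X Y) (X Y : M) :
    B (J X) Y = B X (J Y) := by
  simpa [hJ2] using hJB X (J Y)

theorem lie_map_right_of_lie_map_left (J : L →ₗ[R] L) (hbi : ∀ X Y, ⁅J X, Y⁆ = J ⁅X, Y⁆)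
    (X Y : L) : ⁅X, J Y⁆ = J ⁅X, Y⁆ := by
  rw [← lie_skew, hbi, ← map_neg, lie_skew]

/-- The right-hand side of the Koszul formula for `2 B (∇_X Y) Z` on a Lie algebra. -/
def koszul (B : L →ₗ[R] L →ₗ[R] R) (X Y Z : L) : R :=
  B ⁅X, Y⁆ Z - B ⁅Y, Z⁆ X + B ⁅Z, X⁆ Y

theorem koszul_map_left (B : L →ₗ[R] L →ₗ[R] R) (J : L →ₗ[R] L)
    (hJB : ∀ X Y, B (J X) Y = B X (J Y)) (hbi : ∀ X Y, ⁅J X, Y⁆ = J ⁅X, Y⁆) (X Y Z : L) :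
    koszul B (J X) Y Z = koszul B X Y (J Z) := by
  have hbi' := lie_map_right_of_lie_map_left J hbi
  simp only [koszul, hbi, hbi', hJB]

end

theorem nabla_comm_of_antiKaehler_biinvariant_general
    (V : Type*) [LieRing V] [LieAlgebra ℝ V]
    (B : V →ₗ[ℝ] V →ₗ[ℝ] ℝ)
    (hnd : ∀ X, (∀ Y, B X Y = 0) → X = 0)
    (J : V →ₗ[ℝ] V) (hJ2 : ∀ X, J (J X) = -X)
    (hJB : ∀ X Y, B (J X) (J Y) = - B X Y)
    (nabla : V →ₗ[ℝ] V →ₗ[ℝ] V)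
    (hKoszul : ∀ X Y Z, 2 * B (nabla X Y) Z
        = B ⁅X, Y⁆ Z - B ⁅Y, Z⁆ X + B ⁅Z, X⁆ Y)
    (hbi : ∀ X Y, ⁅J X, Y⁆ = J ⁅X, Y⁆) :
    ∀ X Y, nabla (J X) Y = J (nabla X Y) := by
  intro X Y
  have hJsymm := apply_map_eq_map_apply_of_anti_isometry B J hJ2 hJB
  refine sub_eq_zero.mp (hnd _ fun Z => ?_)
  have h : 2 * B (nabla (J X) Y) Z = 2 * B (J (nabla X Y)) Z := by
    rw [hKoszul, hJsymm, hKoszul]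
    exact koszul_map_left B J hJsymm hbi X Y Z
  rw [map_sub, LinearMap.sub_apply, mul_left_cancel₀ two_ne_zero h, sub_self]

/-- If a left invariant anti-Kähler structure (Koszul Levi-Civita connection)
has a bi-invariant complex structure (`[JX,Y] = J[X,Y]`), then
`∇_{JX} Y = J ∇_X Y`. -/
theorem nabla_comm_of_antiKaehler_biinvariant
    (V : Type*) [LieRing V] [LieAlgebra ℝ V]
    (B : V →ₗ[ℝ] V →ₗ[ℝ] ℝ)
    (hsymm : ∀ X Y, B X Y = B Y X)
    (hnd : ∀ X, (∀ Y, B X Y = 0) → X = 0)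
    (J : V →ₗ[ℝ] V) (hJ2 : ∀ X, J (J X) = -X)
    (hJB : ∀ X Y, B (J X) (J Y) = - B X Y)
    (nabla : V →ₗ[ℝ] V →ₗ[ℝ] V)
    (hKoszul : ∀ X Y Z, 2 * B (nabla X Y) Z
        = B ⁅X, Y⁆ Z - B ⁅Y, Z⁆ X + B ⁅Z, X⁆ Y)
    (hAK : ∀ X Y, nabla X (J Y) = J (nabla X Y))
    (hbi : ∀ X Y, ⁅J X, Y⁆ = J ⁅X, Y⁆) :
    ∀ X Y, nabla (J X) Y = J (nabla X Y) :=
  nabla_comm_of_antiKaehler_biinvariant_general V B hnd J hJ2 hJB nabla hKoszul hbi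
end

section
/- Let 𝔤 be a Lie algebra with an anti-Kähler structure (⟨·,·⟩, J) where J is an abelian complex structure. Then the Levi-Civita connection is given explicitly by ∇_X Y = ½([X,Y] - J[X,JY]) for all X,Y ∈ 𝔤. -/
/-!
The Koszul formula makes `∇` torsion-free and skew with respect to `B`. Since `J` is abelian,
torsion-freeness makes `S(X, Y) = ∇_{JX} Y + ∇_X (JY)` symmetric in `X, Y`; since `∇J = J∇` and
`J` is `B`-symmetric, `B (S(X, Y)) Z` is skew in `Y, Z`. A form symmetric in its first two and skew
in its last two arguments vanishes, so `∇_{JX} = -∇_X J`. Substituting this into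
`[X, JY] = ∇_X (JY) - ∇_{JY} X` gives `J [X, JY] = -∇_X Y - ∇_Y X`, and adding
`[X, Y] = ∇_X Y - ∇_Y X` yields `2 ∇_X Y`.
-/

theorem eq_zero_of_symm_of_antisymm {M α : Type*} [AddGroup M] [IsAddTorsionFree M]
    {T : α → α → α → M} (hsymm : ∀ a b c, T a b c = T b a c)
    (hanti : ∀ a b c, T a b c = -T a c b) (a b c : α) :
    T a b c = 0 := by
  refine self_eq_neg.mp ?_
  calc T a b c = -T a c b := hanti a b c
    _ = -T c a b := by rw [hsymm]
    _ = T c b a := by rw [hanti, neg_neg]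
    _ = T b c a := hsymm c b a
    _ = -T b a c := hanti b c a
    _ = -T a b c := by rw [hsymm]

section CommRing

variable {K V : Type*} [CommRing K] [LieRing V] [LieAlgebra K V]
  {B : V →ₗ[K] V →ₗ[K] K} {J : V →ₗ[K] V} {nabla : V →ₗ[K] V →ₗ[K] V}

theorem apply_J_left_eq_apply_J_right (hJ2 : ∀ X, J (J X) = -X)
    (hJB : ∀ X Y, B (J X) (J Y) = -B X Y) (X Y : V) :
    B (J X) Y = B X (J Y) := by
  simpa [hJ2] using hJB X (J Y)

theorem lie_J_left_eq_neg_lie_J_right (hJ2 : ∀ X, J (J X) = -X)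
    (habel : ∀ X Y, ⁅J X, J Y⁆ = ⁅X, Y⁆) (X Y : V) :
    ⁅J X, Y⁆ = -⁅X, J Y⁆ := by
  rw [← habel X (J Y), hJ2, lie_neg, neg_neg]

theorem nabla_J_add_nabla_J_comm (hJ2 : ∀ X, J (J X) = -X)
    (habel : ∀ X Y, ⁅J X, J Y⁆ = ⁅X, Y⁆)
    (htorsion : ∀ X Y, nabla X Y - nabla Y X = ⁅X, Y⁆) (X Y : V) :
    nabla (J X) Y + nabla X (J Y) = nabla (J Y) X + nabla Y (J X) := by
  rw [← sub_eq_zero]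
  calc nabla (J X) Y + nabla X (J Y) - (nabla (J Y) X + nabla Y (J X))
      = (nabla (J X) Y - nabla Y (J X)) + (nabla X (J Y) - nabla (J Y) X) := by abel
    _ = 0 := by
      rw [htorsion, htorsion, lie_J_left_eq_neg_lie_J_right hJ2 habel, neg_add_cancel]

theorem apply_nabla_J_eq_neg (hJ2 : ∀ X, J (J X) = -X) (hJB : ∀ X Y, B (J X) (J Y) = -B X Y)
    (hmetric : ∀ X Y Z, B (nabla X Y) Z = -B (nabla X Z) Y)
    (hAK : ∀ X Y, nabla X (J Y) = J (nabla X Y)) (X Y Z : V) :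
    B (nabla X (J Y)) Z = -B (nabla X (J Z)) Y := by
  rw [hAK, apply_J_left_eq_apply_J_right hJ2 hJB, hmetric, hAK,
    apply_J_left_eq_apply_J_right hJ2 hJB]

end CommRing

section Field

variable {K V : Type*} [Field K] [CharZero K] [LieRing V] [LieAlgebra K V]
  {B : V →ₗ[K] V →ₗ[K] K} {J : V →ₗ[K] V} {nabla : V →ₗ[K] V →ₗ[K] V}

theorem torsion_eq_zero_of_koszul (hnd : ∀ X, (∀ Y, B X Y = 0) → X = 0)
    (hKoszul : ∀ X Y Z, 2 * B (nabla X Y) Z = B ⁅X, Y⁆ Z - B ⁅Y, Z⁆ X + B ⁅Z, X⁆ Y) (X Y : V) :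
    nabla X Y - nabla Y X = ⁅X, Y⁆ := by
  rw [← sub_eq_zero]
  refine hnd _ fun Z => ?_
  have hXY := hKoszul X Y Z
  have hYX := hKoszul Y X Z
  rw [← lie_skew Y X, ← lie_skew Z Y, ← lie_skew X Z] at hYX
  simp only [map_sub, map_neg, LinearMap.sub_apply, LinearMap.neg_apply] at hYX ⊢
  linear_combination (hXY - hYX) / 2

theorem apply_nabla_eq_neg_of_koszul
    (hKoszul : ∀ X Y Z, 2 * B (nabla X Y) Z = B ⁅X, Y⁆ Z - B ⁅Y, Z⁆ X + B ⁅Z, X⁆ Y) (X Y Z : V) :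
    B (nabla X Y) Z = -B (nabla X Z) Y := by
  have hYZ := hKoszul X Y Z
  have hZY := hKoszul X Z Y
  rw [← lie_skew Z Y, ← lie_skew X Z, ← lie_skew Y X] at hZY
  simp only [map_neg, LinearMap.neg_apply] at hZY
  linear_combination (hYZ + hZY) / 2

theorem nabla_J_left_eq_neg_nabla_J_right (hnd : ∀ X, (∀ Y, B X Y = 0) → X = 0)
    (hJ2 : ∀ X, J (J X) = -X) (hJB : ∀ X Y, B (J X) (J Y) = -B X Y)
    (habel : ∀ X Y, ⁅J X, J Y⁆ = ⁅X, Y⁆)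
    (htorsion : ∀ X Y, nabla X Y - nabla Y X = ⁅X, Y⁆)
    (hmetric : ∀ X Y Z, B (nabla X Y) Z = -B (nabla X Z) Y)
    (hAK : ∀ X Y, nabla X (J Y) = J (nabla X Y)) (X Y : V) :
    nabla (J X) Y = -nabla X (J Y) := by
  rw [eq_neg_iff_add_eq_zero]
  refine hnd _ fun Z =>
    eq_zero_of_symm_of_antisymm (T := fun X Y Z => B (nabla (J X) Y + nabla X (J Y)) Z)
      (fun X Y Z => by rw [nabla_J_add_nabla_J_comm hJ2 habel htorsion]) (fun X Y Z => ?_) X Y Z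
  simp only [map_add, LinearMap.add_apply, hmetric (J X) Y Z,
    apply_nabla_J_eq_neg hJ2 hJB hmetric hAK X Y Z]
  ring

theorem nabla_eq_of_nabla_J_left (hJ2 : ∀ X, J (J X) = -X)
    (htorsion : ∀ X Y, nabla X Y - nabla Y X = ⁅X, Y⁆)
    (hAK : ∀ X Y, nabla X (J Y) = J (nabla X Y))
    (hJleft : ∀ X Y, nabla (J X) Y = -nabla X (J Y)) (X Y : V) :
    nabla X Y = (1/2 : K) • (⁅X, Y⁆ - J ⁅X, J Y⁆) := by
  have hJ_lie : J ⁅X, J Y⁆ = -nabla X Y - nabla Y X := by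
    rw [← htorsion, hJleft, hAK, hAK, map_sub, map_neg, hJ2, hJ2]
    abel
  rw [hJ_lie, ← htorsion]
  module

end Field

theorem nabla_formula_of_antiKaehler_abelian_general
    (V : Type*) [LieRing V] [LieAlgebra ℝ V]
    (B : V →ₗ[ℝ] V →ₗ[ℝ] ℝ)
    (hnd : ∀ X, (∀ Y, B X Y = 0) → X = 0)
    (J : V →ₗ[ℝ] V) (hJ2 : ∀ X, J (J X) = -X)
    (hJB : ∀ X Y, B (J X) (J Y) = - B X Y)
    (nabla : V →ₗ[ℝ] V →ₗ[ℝ] V)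
    (hKoszul : ∀ X Y Z, 2 * B (nabla X Y) Z
        = B ⁅X, Y⁆ Z - B ⁅Y, Z⁆ X + B ⁅Z, X⁆ Y)
    (hAK : ∀ X Y, nabla X (J Y) = J (nabla X Y))
    (habel : ∀ X Y, ⁅J X, J Y⁆ = ⁅X, Y⁆) :
    ∀ X Y, nabla X Y = (1/2 : ℝ) • (⁅X, Y⁆ - J ⁅X, J Y⁆) := by
  have htorsion := torsion_eq_zero_of_koszul hnd hKoszul
  have hmetric := apply_nabla_eq_neg_of_koszul hKoszul
  have hJleft := nabla_J_left_eq_neg_nabla_J_right hnd hJ2 hJB habel htorsion hmetric hAK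
  exact nabla_eq_of_nabla_J_left hJ2 htorsion hAK hJleft

/-- For an anti-Kähler Lie algebra structure with abelian complex structure,
the Levi-Civita connection is `∇_X Y = ½([X,Y] - J[X,JY])`. -/
theorem nabla_formula_of_antiKaehler_abelian
    (V : Type*) [LieRing V] [LieAlgebra ℝ V]
    (B : V →ₗ[ℝ] V →ₗ[ℝ] ℝ)
    (hsymm : ∀ X Y, B X Y = B Y X)
    (hnd : ∀ X, (∀ Y, B X Y = 0) → X = 0)
    (J : V →ₗ[ℝ] V) (hJ2 : ∀ X, J (J X) = -X)
    (hJB : ∀ X Y, B (J X) (J Y) = - B X Y)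
    (nabla : V →ₗ[ℝ] V →ₗ[ℝ] V)
    (hKoszul : ∀ X Y Z, 2 * B (nabla X Y) Z
        = B ⁅X, Y⁆ Z - B ⁅Y, Z⁆ X + B ⁅Z, X⁆ Y)
    (hAK : ∀ X Y, nabla X (J Y) = J (nabla X Y))
    (habel : ∀ X Y, ⁅J X, J Y⁆ = ⁅X, Y⁆) :
    ∀ X Y, nabla X Y = (1/2 : ℝ) • (⁅X, Y⁆ - J ⁅X, J Y⁆) :=
  nabla_formula_of_antiKaehler_abelian_general V B hnd J hJ2 hJB nabla hKoszul hAK habel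
end

section
/- Let 𝔤 be a 2n-dimensional Lie algebra admitting an anti-Kähler structure (⟨·,·⟩, J) with J abelian. Then 𝔤 is unimodular: Tr(ad_X) = 0 for all X ∈ 𝔤. -/
/-!
Torsion-freeness of the Levi-Civita connection gives `ad X = ∇_X - ∇_· X`. The first term is
skew-adjoint for the nondegenerate form `B`, hence traceless. For the second, `∇J = 0` and `J`
abelian force `∇_{JX} = -J ∇_X`: the tensor `∇_{JX} Y + J ∇_X Y` is symmetric in `X, Y` and
skew-adjoint in `Y`, so it vanishes by the argument behind uniqueness of the Levi-Civita
connection. Hence `Y ↦ ∇_Y X` anticommutes with the invertible `J`, and is traceless too.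
-/

open LinearMap (BilinForm)

section

variable {K V : Type*} [Field K]

lemma eq_zero_of_eq_neg [NeZero (2 : K)] {a : K} (h : a = -a) : a = 0 := by
  have h2 : (2 : K) * a = 0 := by linear_combination h
  exact (mul_eq_zero.mp h2).resolve_left two_ne_zero

section Module

variable [AddCommGroup V] [Module K V]

theorem LinearMap.isAdjointPair_self_of_antiIsometry {B : BilinForm K V} {J : Module.End K V}
    (hJ2 : ∀ X, J (J X) = -X) (hJB : ∀ X Y, B (J X) (J Y) = -B X Y) :
    LinearMap.IsAdjointPair B B J J := fun X Y => by
  rw [← neg_neg (B X (J Y)), ← hJB, hJ2, map_neg, neg_neg]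

variable [NeZero (2 : K)]

theorem LinearMap.BilinForm.eq_zero_of_isSkewAdjoint_of_comm {B : BilinForm K V}
    (hBs : B.IsSymm) (hBn : B.SeparatingLeft) {P : V → V → V}
    (hskew : ∀ a, B.IsSkewAdjoint (P a)) (hcomm : ∀ a b, P a b = P b a) (a b : V) :
    P a b = 0 := by
  have hswap : ∀ a b c, B (P a b) c = -B (P a c) b := fun a b c => by
    rw [hskew a b c, Pi.neg_apply, map_neg, hBs.eq]
  refine hBn _ fun c => eq_zero_of_eq_neg ?_
  calc B (P a b) c = -B (P c a) b := by rw [hswap, hcomm]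
    _ = B (P b c) a := by rw [hswap, neg_neg, hcomm]
    _ = -B (P a b) c := by rw [hswap, hcomm]

theorem LinearMap.trace_eq_zero_of_mul_eq_neg_mul {f J : Module.End K V} (hJ : IsUnit J)
    (h : f * J = -(J * f)) : LinearMap.trace K V f = 0 := by
  obtain ⟨u, rfl⟩ := hJ
  refine eq_zero_of_eq_neg ?_
  calc LinearMap.trace K V f = LinearMap.trace K V (↑u⁻¹ * (↑u * f)) := by
        rw [← mul_assoc, u.inv_mul, one_mul]
    _ = LinearMap.trace K V (-(f * ↑u) * ↑u⁻¹) := by rw [LinearMap.trace_mul_comm, h, neg_neg]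
    _ = -LinearMap.trace K V f := by rw [neg_mul, mul_assoc, u.mul_inv, mul_one, map_neg]

theorem LinearMap.trace_eq_zero_of_isSkewAdjoint [FiniteDimensional K V] {B : BilinForm K V}
    (hB : B.SeparatingLeft) {f : Module.End K V} (hf : B.IsSkewAdjoint f) :
    LinearMap.trace K V f = 0 := by
  let e : V ≃ₗ[K] Module.Dual K V := B.linearEquivOfInjective
    (LinearMap.ker_eq_bot.mp (LinearMap.separatingLeft_iff_ker_eq_bot.mp hB))
    Subspace.dual_finrank_eq.symm
  have hconj : e.symm.conj (Module.Dual.transpose f) = -f := by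
    ext x
    apply e.injective
    ext y
    simp [LinearEquiv.conj_apply, Module.Dual.transpose_apply, e, hf x y]
  refine eq_zero_of_eq_neg ?_
  calc LinearMap.trace K V f = LinearMap.trace K V (e.symm.conj (Module.Dual.transpose f)) := by
        rw [LinearMap.trace_conj', LinearMap.trace_transpose']
    _ = -LinearMap.trace K V f := by rw [hconj, map_neg]

end Module

section LieAlgebra

variable [LieRing V] [LieAlgebra K V]

-- The Koszul formula for left-invariant vector fields, whose derivative terms vanish.
def IsLeviCivita (B : BilinForm K V) (nabla : V →ₗ[K] V →ₗ[K] V) : Prop :=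
  ∀ X Y Z, 2 * B (nabla X Y) Z = B ⁅X, Y⁆ Z - B ⁅Y, Z⁆ X + B ⁅Z, X⁆ Y

namespace IsLeviCivita

variable [NeZero (2 : K)] {B : BilinForm K V} {nabla : V →ₗ[K] V →ₗ[K] V}

theorem isSkewAdjoint (h : IsLeviCivita B nabla) (hB : B.IsSymm) (X : V) :
    B.IsSkewAdjoint (nabla X) := fun Y Z => by
  have hXYZ := h X Y Z
  have hXZY := h X Z Y
  rw [← lie_skew X Z, ← lie_skew Z Y, ← lie_skew Y X] at hXZY
  rw [Pi.neg_apply, map_neg, hB.eq Y]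
  refine mul_left_cancel₀ (two_ne_zero (α := K)) ?_
  simp only [map_neg, LinearMap.neg_apply] at hXZY
  linear_combination hXYZ + hXZY

theorem sub_swap_eq_lie (h : IsLeviCivita B nabla) (hB : B.SeparatingLeft) (X Y : V) :
    nabla X Y - nabla Y X = ⁅X, Y⁆ := by
  refine sub_eq_zero.mp (hB _ fun Z => mul_left_cancel₀ (two_ne_zero (α := K)) ?_)
  have hYXZ := h Y X Z
  rw [← lie_skew Y X, ← lie_skew X Z, ← lie_skew Z Y] at hYXZ
  simp only [map_neg, LinearMap.neg_apply, map_sub, LinearMap.sub_apply] at hYXZ ⊢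
  linear_combination h X Y Z - hYXZ

theorem ad_eq_sub_flip (h : IsLeviCivita B nabla) (hB : B.SeparatingLeft) (X : V) :
    LieAlgebra.ad K V X = nabla X - nabla.flip X := by
  ext Y
  simp [h.sub_swap_eq_lie hB]

theorem apply_J_left (h : IsLeviCivita B nabla) (hBs : B.IsSymm) (hBn : B.SeparatingLeft)
    {J : Module.End K V} (hJ2 : ∀ X, J (J X) = -X) (hJB : ∀ X Y, B (J X) (J Y) = -B X Y)
    (hJpar : ∀ X Y, nabla X (J Y) = J (nabla X Y)) (habel : ∀ X Y, ⁅J X, J Y⁆ = ⁅X, Y⁆)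
    (X Y : V) : nabla (J X) Y = -J (nabla X Y) := by
  have hJ : LinearMap.IsAdjointPair B B J J := LinearMap.isAdjointPair_self_of_antiIsometry hJ2 hJB
  have hskew : ∀ X, B.IsSkewAdjoint (fun Y => nabla (J X) Y + J (nabla X Y)) := fun X Y Z => by
    simp only [Pi.neg_apply, map_add, LinearMap.add_apply, map_neg, neg_add, hJ _ Z,
      h.isSkewAdjoint hBs _ _ Z, h.isSkewAdjoint hBs X Y (J Z), hJpar]
  have hcomm : ∀ X Y, nabla (J X) Y + J (nabla X Y) = nabla (J Y) X + J (nabla Y X) := by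
    have hJlie : ∀ X Y, ⁅J X, Y⁆ = ⁅J Y, X⁆ := fun X Y => by
      have hab := habel X (J Y)
      rw [hJ2, lie_neg, ← lie_skew X (J Y)] at hab
      exact neg_injective hab
    have hleft : ∀ X Y, nabla (J X) Y = J (nabla Y X) + ⁅J X, Y⁆ := fun X Y => by
      rw [← hJpar, ← h.sub_swap_eq_lie hBn, add_sub_cancel]
    intro X Y
    rw [hleft X, hleft Y, hJlie X]
    abel
  exact eq_neg_of_add_eq_zero_left
    (LinearMap.BilinForm.eq_zero_of_isSkewAdjoint_of_comm hBs hBn hskew hcomm X Y)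

end IsLeviCivita

end LieAlgebra

end

theorem unimodular_of_antiKaehler_abelian_general
    (V : Type*) [LieRing V] [LieAlgebra ℝ V]
    (B : V →ₗ[ℝ] V →ₗ[ℝ] ℝ)
    (hsymm : ∀ X Y, B X Y = B Y X)
    (hnd : ∀ X, (∀ Y, B X Y = 0) → X = 0)
    (J : V →ₗ[ℝ] V) (hJ2 : ∀ X, J (J X) = -X)
    (hJB : ∀ X Y, B (J X) (J Y) = - B X Y)
    (nabla : V →ₗ[ℝ] V →ₗ[ℝ] V)
    (hKoszul : ∀ X Y Z, 2 * B (nabla X Y) Z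
        = B ⁅X, Y⁆ Z - B ⁅Y, Z⁆ X + B ⁅Z, X⁆ Y)
    (hAK : ∀ X Y, nabla X (J Y) = J (nabla X Y))
    (habel : ∀ X Y, ⁅J X, J Y⁆ = ⁅X, Y⁆)
    [FiniteDimensional ℝ V] :
    ∀ X : V, LinearMap.trace ℝ V (LieAlgebra.ad ℝ V X) = 0 := by
  intro X
  have hLC : IsLeviCivita B nabla := hKoszul
  have hJunit : IsUnit J := ⟨⟨J, -J, by ext; simp [hJ2], by ext; simp [hJ2]⟩, rfl⟩
  have hanti : nabla.flip X * J = -(J * nabla.flip X) := by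
    ext Y
    exact hLC.apply_J_left ⟨hsymm⟩ hnd hJ2 hJB hAK habel Y X
  rw [hLC.ad_eq_sub_flip hnd, map_sub,
    LinearMap.trace_eq_zero_of_isSkewAdjoint hnd (hLC.isSkewAdjoint ⟨hsymm⟩ X),
    LinearMap.trace_eq_zero_of_mul_eq_neg_mul hJunit hanti, sub_zero]

/-- A `2n`-dimensional Lie algebra admitting an anti-Kähler structure with
abelian complex structure is unimodular: `Tr(ad_X) = 0` for all `X`. -/
theorem unimodular_of_antiKaehler_abelian
    (V : Type*) [LieRing V] [LieAlgebra ℝ V]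
    (B : V →ₗ[ℝ] V →ₗ[ℝ] ℝ)
    (hsymm : ∀ X Y, B X Y = B Y X)
    (hnd : ∀ X, (∀ Y, B X Y = 0) → X = 0)
    (J : V →ₗ[ℝ] V) (hJ2 : ∀ X, J (J X) = -X)
    (hJB : ∀ X Y, B (J X) (J Y) = - B X Y)
    (nabla : V →ₗ[ℝ] V →ₗ[ℝ] V)
    (hKoszul : ∀ X Y Z, 2 * B (nabla X Y) Z
        = B ⁅X, Y⁆ Z - B ⁅Y, Z⁆ X + B ⁅Z, X⁆ Y)
    (hAK : ∀ X Y, nabla X (J Y) = J (nabla X Y))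
    (habel : ∀ X Y, ⁅J X, J Y⁆ = ⁅X, Y⁆)
    [FiniteDimensional ℝ V] (n : ℕ) (hdim : Module.finrank ℝ V = 2 * n) :
    ∀ X : V, LinearMap.trace ℝ V (LieAlgebra.ad ℝ V X) = 0 :=
  unimodular_of_antiKaehler_abelian_general V B hsymm hnd J hJ2 hJB nabla hKoszul hAK habel
end

section
/- Let 𝔤 be a Lie algebra with anti-Kähler structure (⟨·,·⟩, J), J abelian. Then the Levi-Civita connection ∇ satisfies ∇_X∇_Y Z = ∇_Y∇_X Z for all X,Y,Z ∈ 𝔤, where ∇_X Y = ½([X,Y] - J[X,JY]). -/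
/-!
An abelian complex structure turns the Koszul formula into the closed expression
`2 ∇_X Y = [X,Y] - J[X,JY]`: parallelism of `J` compares the Koszul formula at `(X, JY, Z)`
with the one at `(X, Y, JZ)`, and three instances of that comparison isolate `⟨J[X,JY], Z⟩`.
Expanding `4 ∇_X ∇_Y Z` with this expression gives `P(X,Y) + J P(JX,Y)` with
`P(X,Y) = [X,[Y,Z]] - [JX,[JY,Z]]`.
By the Jacobi identity `P(X,Y) - P(Y,X) = [[X,Y] - [JX,JY], Z] = 0`,
and `P(JX,Y) = P(Y,JX) = P(JY,X)` by `J² = -1`, so the expansion is symmetric in `X` and `Y`.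
-/

section LieBracket

variable {R L : Type*} [CommRing R] [LieRing L] [LieAlgebra R L] (J : L →ₗ[R] L)

def twiceNabla (X Y : L) : L := ⁅X, Y⁆ - J ⁅X, J Y⁆

variable {J}

theorem lie_J_right (hJ2 : ∀ X, J (J X) = -X) (habel : ∀ X Y, ⁅J X, J Y⁆ = ⁅X, Y⁆) (X Y : L) :
    ⁅X, J Y⁆ = -⁅J X, Y⁆ := by
  rw [← habel, hJ2, lie_neg]

theorem lie_J_left (hJ2 : ∀ X, J (J X) = -X) (habel : ∀ X Y, ⁅J X, J Y⁆ = ⁅X, Y⁆) (X Y : L) :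
    ⁅J X, Y⁆ = -⁅X, J Y⁆ := by
  rw [lie_J_right hJ2 habel, neg_neg]

theorem lie_lie_sub_lie_J_lie_J_comm (habel : ∀ X Y, ⁅J X, J Y⁆ = ⁅X, Y⁆) (X Y Z : L) :
    ⁅X, ⁅Y, Z⁆⁆ - ⁅J X, ⁅J Y, Z⁆⁆ = ⁅Y, ⁅X, Z⁆⁆ - ⁅J Y, ⁅J X, Z⁆⁆ := by
  have jacobi : ∀ A B : L, ⁅A, ⁅B, Z⁆⁆ - ⁅B, ⁅A, Z⁆⁆ = ⁅⁅A, B⁆, Z⁆ := fun A B => by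
    rw [lie_lie]
  rw [sub_eq_sub_iff_sub_eq_sub, jacobi, jacobi, habel]

theorem twiceNabla_twiceNabla (hJ2 : ∀ X, J (J X) = -X) (habel : ∀ X Y, ⁅J X, J Y⁆ = ⁅X, Y⁆)
    (X Y Z : L) :
    twiceNabla J X (twiceNabla J Y Z) =
      (⁅X, ⁅Y, Z⁆⁆ - ⁅J X, ⁅J Y, Z⁆⁆) + J (⁅J X, ⁅Y, Z⁆⁆ - ⁅J (J X), ⁅J Y, Z⁆⁆) := by
  simp only [twiceNabla, map_sub, hJ2, lie_sub, lie_J_right hJ2 habel, lie_neg, neg_lie, map_neg]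
  abel

theorem twiceNabla_comm (hJ2 : ∀ X, J (J X) = -X) (habel : ∀ X Y, ⁅J X, J Y⁆ = ⁅X, Y⁆)
    (X Y Z : L) :
    twiceNabla J X (twiceNabla J Y Z) = twiceNabla J Y (twiceNabla J X Z) := by
  have hJX : ⁅J X, ⁅Y, Z⁆⁆ - ⁅J (J X), ⁅J Y, Z⁆⁆ = ⁅J Y, ⁅X, Z⁆⁆ - ⁅J (J Y), ⁅J X, Z⁆⁆ := by
    rw [lie_lie_sub_lie_J_lie_J_comm habel (J X)]
    simp only [hJ2, neg_lie, lie_neg]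
    abel
  rw [twiceNabla_twiceNabla hJ2 habel, twiceNabla_twiceNabla hJ2 habel,
    lie_lie_sub_lie_J_lie_J_comm habel X, hJX]

end LieBracket

section Koszul

variable {K V : Type*} [Field K] [LieRing V] [LieAlgebra K V]
  {B : V →ₗ[K] V →ₗ[K] K} {J : V →ₗ[K] V}

theorem bilin_J_left (hJ2 : ∀ X, J (J X) = -X) (hJB : ∀ X Y, B (J X) (J Y) = - B X Y)
    (X Y : V) : B (J X) Y = B X (J Y) := by
  have h := hJB X (J Y)
  rw [hJ2, map_neg] at h
  linear_combination -h

variable {nabla : V →ₗ[K] V →ₗ[K] V}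

theorem koszul_J_middle (hJ2 : ∀ X, J (J X) = -X) (hJB : ∀ X Y, B (J X) (J Y) = - B X Y)
    (hKoszul : ∀ X Y Z, 2 * B (nabla X Y) Z = B ⁅X, Y⁆ Z - B ⁅Y, Z⁆ X + B ⁅Z, X⁆ Y)
    (hAK : ∀ X Y, nabla X (J Y) = J (nabla X Y)) (X Y Z : V) :
    B ⁅X, J Y⁆ Z - B ⁅J Y, Z⁆ X + B ⁅Z, X⁆ (J Y)
      = B ⁅X, Y⁆ (J Z) - B ⁅Y, J Z⁆ X + B ⁅J Z, X⁆ Y := by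
  have hpar : B (nabla X (J Y)) Z = B (nabla X Y) (J Z) := by
    rw [hAK, bilin_J_left hJ2 hJB]
  linear_combination (hKoszul X Y (J Z)) - hKoszul X (J Y) Z + 2 * hpar

theorem bilin_lie_J_J [CharZero K] (hJ2 : ∀ X, J (J X) = -X)
    (hJB : ∀ X Y, B (J X) (J Y) = - B X Y)
    (hKoszul : ∀ X Y Z, 2 * B (nabla X Y) Z = B ⁅X, Y⁆ Z - B ⁅Y, Z⁆ X + B ⁅Z, X⁆ Y)
    (hAK : ∀ X Y, nabla X (J Y) = J (nabla X Y)) (habel : ∀ X Y, ⁅J X, J Y⁆ = ⁅X, Y⁆)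
    (X Y Z : V) : B ⁅X, J Y⁆ (J Z) = B ⁅Y, Z⁆ X - B ⁅Z, X⁆ Y := by
  have h₁ := koszul_J_middle hJ2 hJB hKoszul hAK X (J Y) Z
  have h₂ := koszul_J_middle hJ2 hJB hKoszul hAK Y (J Z) X
  have h₃ := koszul_J_middle hJ2 hJB hKoszul hAK (J X) Y Z
  simp only [hJ2, habel, lie_J_left hJ2 habel, lie_neg, neg_lie, map_neg, LinearMap.neg_apply]
    at h₁ h₂ h₃
  linear_combination (-h₁ + 2 * h₂ + h₃) / 4

theorem two_smul_nabla [CharZero K] (hJ2 : ∀ X, J (J X) = -X)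
    (hJB : ∀ X Y, B (J X) (J Y) = - B X Y)
    (hnd : ∀ X, (∀ Y, B X Y = 0) → X = 0)
    (hKoszul : ∀ X Y Z, 2 * B (nabla X Y) Z = B ⁅X, Y⁆ Z - B ⁅Y, Z⁆ X + B ⁅Z, X⁆ Y)
    (hAK : ∀ X Y, nabla X (J Y) = J (nabla X Y)) (habel : ∀ X Y, ⁅J X, J Y⁆ = ⁅X, Y⁆)
    (X Y : V) : (2 : K) • nabla X Y = twiceNabla J X Y := by
  refine sub_eq_zero.mp (hnd _ fun Z => ?_)
  simp only [twiceNabla, map_sub, map_smul, LinearMap.sub_apply, LinearMap.smul_apply,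
    smul_eq_mul, bilin_J_left hJ2 hJB, bilin_lie_J_J hJ2 hJB hKoszul hAK habel]
  linear_combination hKoszul X Y Z

end Koszul

theorem nabla_second_derivatives_commute_general
    (V : Type*) [LieRing V] [LieAlgebra ℝ V]
    (B : V →ₗ[ℝ] V →ₗ[ℝ] ℝ)
    (hnd : ∀ X, (∀ Y, B X Y = 0) → X = 0)
    (J : V →ₗ[ℝ] V) (hJ2 : ∀ X, J (J X) = -X)
    (hJB : ∀ X Y, B (J X) (J Y) = - B X Y)
    (nabla : V →ₗ[ℝ] V →ₗ[ℝ] V)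
    (hKoszul : ∀ X Y Z, 2 * B (nabla X Y) Z
        = B ⁅X, Y⁆ Z - B ⁅Y, Z⁆ X + B ⁅Z, X⁆ Y)
    (hAK : ∀ X Y, nabla X (J Y) = J (nabla X Y))
    (habel : ∀ X Y, ⁅J X, J Y⁆ = ⁅X, Y⁆) :
    ∀ X Y Z, nabla X (nabla Y Z) = nabla Y (nabla X Z) := by
  have hnabla := two_smul_nabla hJ2 hJB hnd hKoszul hAK habel
  have four_smul : ∀ X Y Z, (4 : ℝ) • nabla X (nabla Y Z) = twiceNabla J X (twiceNabla J Y Z) :=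
    fun X Y Z => by
      rw [show (4 : ℝ) = 2 * 2 by norm_num, mul_smul, ← map_smul, hnabla, hnabla]
  intro X Y Z
  apply smul_right_injective V (four_ne_zero' ℝ)
  simp only [four_smul, twiceNabla_comm hJ2 habel X Y Z]

/-- For an anti-Kähler Lie algebra structure with abelian complex structure,
the Levi-Civita connection satisfies `∇_X ∇_Y Z = ∇_Y ∇_X Z`. -/
theorem nabla_second_derivatives_commute
    (V : Type*) [LieRing V] [LieAlgebra ℝ V]
    (B : V →ₗ[ℝ] V →ₗ[ℝ] ℝ)
    (hsymm : ∀ X Y, B X Y = B Y X)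
    (hnd : ∀ X, (∀ Y, B X Y = 0) → X = 0)
    (J : V →ₗ[ℝ] V) (hJ2 : ∀ X, J (J X) = -X)
    (hJB : ∀ X Y, B (J X) (J Y) = - B X Y)
    (nabla : V →ₗ[ℝ] V →ₗ[ℝ] V)
    (hKoszul : ∀ X Y Z, 2 * B (nabla X Y) Z
        = B ⁅X, Y⁆ Z - B ⁅Y, Z⁆ X + B ⁅Z, X⁆ Y)
    (hAK : ∀ X Y, nabla X (J Y) = J (nabla X Y))
    (habel : ∀ X Y, ⁅J X, J Y⁆ = ⁅X, Y⁆) :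
    ∀ X Y Z, nabla X (nabla Y Z) = nabla Y (nabla X Z) :=
  nabla_second_derivatives_commute_general V B hnd J hJ2 hJB nabla hKoszul hAK habel
end

section
/- Let 𝔤 be a Lie algebra with an almost anti-Hermitian structure (⟨·,·⟩, J) and define θ(X,Y,Z) := ⟨[JX,Y],Z⟩ + ⟨[JY,Z],X⟩ + ⟨[JZ,X],Y⟩. Then the structure is anti-Kähler (∇J = 0 for the Levi-Civita connection) if and only if θ satisfies θ(X,Y,Z) = -θ(X,Z,Y) and θ(JX,Y,Z) = θ(X,JY,Z) for all X,Y,Z ∈ 𝔤. -/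
/-- The 3-tensor `θ(X,Y,Z) = ⟨[JX,Y],Z⟩ + ⟨[JY,Z],X⟩ + ⟨[JZ,X],Y⟩` associated
to a left invariant almost anti-Hermitian structure. -/
def antiHermitianTheta {V : Type*} [LieRing V] [LieAlgebra ℝ V]
    (B : V →ₗ[ℝ] V →ₗ[ℝ] ℝ) (J : V →ₗ[ℝ] V) (X Y Z : V) : ℝ :=
  B ⁅J X, Y⁆ Z + B ⁅J Y, Z⁆ X + B ⁅J Z, X⁆ Y

/-!
Let `N(X,Y,Z) = 2⟨(∇_X J)Y, Z⟩`. Through the Koszul formula, `N` and `θ` are both linear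
combinations of the numbers `⟨[U,V],W⟩` with `U, V, W` among `X, Y, Z, JX, JY, JZ`, and
comparing them gives three identities: the defect `θ(X,Y,Z) + θ(X,Z,Y)` from skew-symmetry
and the defect `θ(JX,Y,Z) - θ(X,JY,Z)` from purity are combinations of values of `N`, and
conversely `N(X,Y,Z)` is a combination of such defects. By nondegeneracy, `∇J = 0` iff
`N = 0`, and so, by these identities, is the pair of conditions on `θ`.
-/

section

variable {V : Type*} [LieRing V] [LieAlgebra ℝ V] (B : V →ₗ[ℝ] V →ₗ[ℝ] ℝ)

/-- The right-hand side of the Koszul formula for `2⟨∇_X Y, Z⟩`. -/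
def koszulForm (X Y Z : V) : ℝ := B ⁅X, Y⁆ Z - B ⁅Y, Z⁆ X + B ⁅Z, X⁆ Y

/-- `2⟨(∇_X J)Y, Z⟩ = 2⟨∇_X (JY), Z⟩ - 2⟨∇_X Y, JZ⟩`, expressed through the Koszul formula. -/
def nablaJForm (J : V →ₗ[ℝ] V) (X Y Z : V) : ℝ :=
  koszulForm B X (J Y) Z - koszulForm B X Y (J Z)

theorem apply_lie_swap (X Y Z : V) : B ⁅X, Y⁆ Z = -B ⁅Y, X⁆ Z := by
  rw [← lie_skew, map_neg, LinearMap.neg_apply]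

theorem antiHermitianTheta_add_swap (J : V →ₗ[ℝ] V) (X Y Z : V) :
    antiHermitianTheta B J X Y Z + antiHermitianTheta B J X Z Y
      = -(nablaJForm B J X Y Z + nablaJForm B J Y X Z + nablaJForm B J Z X Y) / 2 := by
  simp only [antiHermitianTheta, nablaJForm, koszulForm]
  grind [apply_lie_swap]

variable {B} {J : V →ₗ[ℝ] V} (hJ2 : ∀ X, J (J X) = -X)
include hJ2

theorem antiHermitianTheta_J_sub_J (X Y Z : V) :
    antiHermitianTheta B J (J X) Y Z - antiHermitianTheta B J X (J Y) Z
      = (nablaJForm B J Z X (J Y) + nablaJForm B J (J Z) X Y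
          - nablaJForm B J X Y (J Z) - nablaJForm B J (J X) Y Z) / 2 := by
  simp only [antiHermitianTheta, nablaJForm, koszulForm, hJ2, neg_lie, lie_neg, map_neg,
    LinearMap.neg_apply]
  grind [apply_lie_swap]

theorem nablaJForm_eq_antiHermitianTheta (X Y Z : V) :
    nablaJForm B J X Y Z
      = (antiHermitianTheta B J (J X) Y (J Z) + antiHermitianTheta B J (J X) (J Z) Y)
        - (antiHermitianTheta B J X Y Z + antiHermitianTheta B J X Z Y)
        - (antiHermitianTheta B J (J Z) Y (J X) - antiHermitianTheta B J Z (J Y) (J X)) := by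
  simp only [antiHermitianTheta, nablaJForm, koszulForm, hJ2, neg_lie, map_neg,
    LinearMap.neg_apply]
  grind [apply_lie_swap]

theorem nablaJForm_eq_zero_iff :
    (∀ X Y Z, nablaJForm B J X Y Z = 0) ↔
      ((∀ X Y Z, antiHermitianTheta B J X Y Z = -antiHermitianTheta B J X Z Y) ∧
       (∀ X Y Z, antiHermitianTheta B J (J X) Y Z = antiHermitianTheta B J X (J Y) Z)) := by
  constructor
  · intro hN
    refine ⟨fun X Y Z => ?_, fun X Y Z => ?_⟩
    · linarith [antiHermitianTheta_add_swap B J X Y Z, hN X Y Z, hN Y X Z, hN Z X Y]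
    · linarith [antiHermitianTheta_J_sub_J (B := B) hJ2 X Y Z, hN Z X (J Y), hN (J Z) X Y,
        hN X Y (J Z), hN (J X) Y Z]
  · rintro ⟨hskew, hpure⟩ X Y Z
    rw [nablaJForm_eq_antiHermitianTheta hJ2, hskew (J X), hskew X, hpure Z Y (J X)]
    ring

theorem apply_J_left (hJB : ∀ X Y, B (J X) (J Y) = -B X Y) (U W : V) :
    B (J U) W = B U (J W) := by
  have h := hJB U (J W)
  rw [hJ2, map_neg] at h
  linarith

theorem two_mul_apply_nabla_J_sub (hJB : ∀ X Y, B (J X) (J Y) = -B X Y)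
    {nabla : V →ₗ[ℝ] V →ₗ[ℝ] V} (hKoszul : ∀ X Y Z, 2 * B (nabla X Y) Z = koszulForm B X Y Z)
    (X Y Z : V) :
    2 * B (nabla X (J Y) - J (nabla X Y)) Z = nablaJForm B J X Y Z := by
  rw [nablaJForm, ← hKoszul, ← hKoszul, map_sub, LinearMap.sub_apply, apply_J_left hJ2 hJB]
  ring

theorem nabla_J_comm_iff_nablaJForm_eq_zero (hnd : ∀ X, (∀ Y, B X Y = 0) → X = 0)
    (hJB : ∀ X Y, B (J X) (J Y) = -B X Y)
    {nabla : V →ₗ[ℝ] V →ₗ[ℝ] V} (hKoszul : ∀ X Y Z, 2 * B (nabla X Y) Z = koszulForm B X Y Z) :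
    (∀ X Y, nabla X (J Y) = J (nabla X Y)) ↔ ∀ X Y Z, nablaJForm B J X Y Z = 0 := by
  have hN := two_mul_apply_nabla_J_sub hJ2 hJB hKoszul
  constructor
  · intro hcomm X Y Z
    rw [← hN, hcomm, sub_self, map_zero, LinearMap.zero_apply, mul_zero]
  · intro hzero X Y
    refine sub_eq_zero.mp (hnd _ fun Z => ?_)
    linarith [hN X Y Z, hzero X Y Z]

end

theorem antiKaehler_iff_theta_skew_pure_general
    (V : Type*) [LieRing V] [LieAlgebra ℝ V]
    (B : V →ₗ[ℝ] V →ₗ[ℝ] ℝ)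
    (hnd : ∀ X, (∀ Y, B X Y = 0) → X = 0)
    (J : V →ₗ[ℝ] V) (hJ2 : ∀ X, J (J X) = -X)
    (hJB : ∀ X Y, B (J X) (J Y) = - B X Y)
    (nabla : V →ₗ[ℝ] V →ₗ[ℝ] V)
    (hKoszul : ∀ X Y Z, 2 * B (nabla X Y) Z
        = B ⁅X, Y⁆ Z - B ⁅Y, Z⁆ X + B ⁅Z, X⁆ Y) :
    (∀ X Y, nabla X (J Y) = J (nabla X Y)) ↔
      ((∀ X Y Z, antiHermitianTheta B J X Y Z = - antiHermitianTheta B J X Z Y) ∧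
       (∀ X Y Z, antiHermitianTheta B J (J X) Y Z = antiHermitianTheta B J X (J Y) Z)) :=
  (nabla_J_comm_iff_nablaJForm_eq_zero hJ2 hnd hJB hKoszul).trans (nablaJForm_eq_zero_iff hJ2)

/-- A left invariant almost anti-Hermitian structure on a Lie group is
anti-Kähler if and only if the associated 3-tensor `θ` is skew-symmetric in
the last two arguments and pure: `θ(X,Y,Z) = -θ(X,Z,Y)` and
`θ(JX,Y,Z) = θ(X,JY,Z)`. -/
theorem antiKaehler_iff_theta_skew_pure
    (V : Type*) [LieRing V] [LieAlgebra ℝ V]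
    (B : V →ₗ[ℝ] V →ₗ[ℝ] ℝ)
    (hsymm : ∀ X Y, B X Y = B Y X)
    (hnd : ∀ X, (∀ Y, B X Y = 0) → X = 0)
    (J : V →ₗ[ℝ] V) (hJ2 : ∀ X, J (J X) = -X)
    (hJB : ∀ X Y, B (J X) (J Y) = - B X Y)
    (nabla : V →ₗ[ℝ] V →ₗ[ℝ] V)
    (hKoszul : ∀ X Y Z, 2 * B (nabla X Y) Z
        = B ⁅X, Y⁆ Z - B ⁅Y, Z⁆ X + B ⁅Z, X⁆ Y) :
    (∀ X Y, nabla X (J Y) = J (nabla X Y)) ↔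
      ((∀ X Y Z, antiHermitianTheta B J X Y Z = - antiHermitianTheta B J X Z Y) ∧
       (∀ X Y Z, antiHermitianTheta B J (J X) Y Z = antiHermitianTheta B J X (J Y) Z)) :=
  antiKaehler_iff_theta_skew_pure_general V B hnd J hJ2 hJB nabla hKoszul
end
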